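/- Fix an integer k ≥ 2. Let Z be an element of the subalgebra of U(g ⊗ A_k) generated by g ⊗ A_k⁻ which does not lie in ℂ·1 (i.e. Z is a non-constant element of U(g ⊗ A_k⁻)). Then there exists an integer p₀ > 0 (depending on Z) such that for every integer r ≥ p₀ there exists x ∈ g with [x ⊗ t_{k-1}ʳ, Z] ≠ 0 in U(g ⊗ A_k); that is, the commutator [g ⊗ t_{k-1}ʳ, Z] does not vanish for all r ≥ p₀. -/

import Mathlib

/-!
Statement 2: Fix `k ≥ 2`. Let `g` be a finite-dimensional simple Lie algebra over `ℂ`,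
`A_k = ℂ[t₁^{±1}, …, t_k^{±1}]` (realized as `AddMonoidAlgebra ℂ (Fin k → ℤ)`), and
`g ⊗ A_k` the multi-loop Lie algebra (realized as `A_k ⊗[ℂ] g`).  If `Z` lies in the
subalgebra of `U(g ⊗ A_k)` generated by `g ⊗ A_k⁻` (the span of `x ⊗ t^n` with
`n_k < 0`) and `Z ∉ ℂ·1`, then there is `p₀ > 0` such that for every `r ≥ p₀` there
exists `x ∈ g` with `[x ⊗ t_{k-1}^r, Z] ≠ 0`.  (Variables `t₁, …, t_k` are indexed by
`0, …, k-1 : Fin k`, so `t_{k-1}` has index `k-2` and `t_k` has index `k-1`.)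
-/

open scoped TensorProduct

noncomputable section

/-- The Laurent polynomial ring `ℂ[t₁^{±1}, …, t_k^{±1}]`. -/
abbrev LaurentK (k : ℕ) : Type := AddMonoidAlgebra ℂ (Fin k → ℤ)

/-- The monomial `t₁^{n₁} ⋯ t_k^{n_k}`. -/
abbrev tmon {k : ℕ} (n : Fin k → ℤ) : LaurentK k := AddMonoidAlgebra.single n 1

/-- The multi-loop Lie algebra `g ⊗ A_k`, realized as the base change `A_k ⊗[ℂ] g`. -/
abbrev LoopAlg (k : ℕ) (g : Type*) [LieRing g] [LieAlgebra ℂ g] : Type _ :=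
  LaurentK k ⊗[ℂ] g

/-- `g ⊗ A_k` is a Lie algebra over `ℂ` (restriction of scalars of the
`A_k`-Lie algebra structure from base change). -/
instance (k : ℕ) (g : Type*) [LieRing g] [LieAlgebra ℂ g] :
    LieAlgebra ℂ (LoopAlg k g) :=
  { lie_smul := fun t x y => by
      rw [← algebraMap_smul (LaurentK k) t y,
        lie_smul (R := LaurentK k) (algebraMap ℂ (LaurentK k) t) x y, algebraMap_smul] }

/-!
The proof is a principal-symbol argument in `U(L)`, `L = g ⊗ A_k`, that avoids the PBW theorem.
Because `g`, hence `L`, is centreless, `ι : L → U(L)` is injective, so for a basis `b` of `L` there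
is a linear `f : U(L) → ℂ[X_i]` with `f 1 = 0` and `f (ι (b i)) = X i`. The convolution powers
`symbol f p` of `f` for the coproduct `Δ a = a ⊗ 1 + 1 ⊗ a` vanish on the `(p-1)`-st filtration step
and send `a₁ ⋯ a_p` to `p! ∏ f (ι aᵢ)`. Hence if `Z` has exact filtration degree `p`, its symbol `P`
is a nonzero homogeneous polynomial, and the symbol of `[a, Z]` is `D_a P`, where `D_a` is the
derivation extending `ad a`.

Let `X_{(n₀, j₀)}` occur in `P`. If `r` is large compared with the exponents of `t_{k-1}` occurring
in `P`, the variables `X_{(n₀ + r e_{k-1}, j')}` do not occur in `P`, and differentiating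
`D_{x ⊗ t_{k-1}^r} P = 0` with respect to them gives `∑ⱼ [x, gⱼ]_{j'} ∂_{(n₀, j)} P = 0` for all `x`.
As `g` is centreless, every `∂_{(n₀, j)} P` vanishes, contradicting the choice of `(n₀, j₀)`.
-/

namespace List

variable {α M : Type*} [AddCommMonoid M]

def unshuffles : List α → List (List α × List α)
  | [] => [([], [])]
  | a :: l =>
    (l.unshuffles.map fun s => (a :: s.1, s.2)) ++ (l.unshuffles.map fun s => (s.1, a :: s.2))

lemma length_add_length_of_mem_unshuffles {l : List α} {s : List α × List α}
    (hs : s ∈ l.unshuffles) : s.1.length + s.2.length = l.length := by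
  induction l generalizing s with
  | nil => simp_all [unshuffles]
  | cons a l ih =>
    simp only [unshuffles, mem_append, mem_map] at hs
    rcases hs with ⟨s, hs, rfl⟩ | ⟨s, hs, rfl⟩ <;> simp [← ih hs] <;> omega

lemma sum_map_unshuffles_of_fst_eq_nil (l : List α) (h : List α × List α → M)
    (hh : ∀ s ∈ l.unshuffles, s.1 ≠ [] → h s = 0) : (l.unshuffles.map h).sum = h ([], l) := by
  induction l generalizing h with
  | nil => simp [unshuffles]
  | cons a l ih =>
    rw [unshuffles, map_append, sum_append, map_map, map_map,
      sum_eq_zero fun _ hx => ?_, zero_add]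
    · exact ih _ fun s hs hs₁ => hh _ (by simp [unshuffles, hs]) hs₁
    · obtain ⟨s, hs, rfl⟩ := mem_map.mp hx
      exact hh _ (by simp [unshuffles, hs]) (by simp)

lemma sum_map_unshuffles_of_length_fst_eq_one (l : List α) (h : List α × List α → M)
    (hh : ∀ s ∈ l.unshuffles, s.1.length ≠ 1 → h s = 0) :
    (l.unshuffles.map h).sum = ∑ i : Fin l.length, h ([l[i]], l.eraseIdx i) := by
  induction l generalizing h with
  | nil => simp_all [unshuffles]
  | cons a l ih =>
    rw [unshuffles, map_append, sum_append, map_map, map_map,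
      sum_map_unshuffles_of_fst_eq_nil l (h ∘ fun s => (a :: s.1, s.2))
        (fun s hs hs₁ => hh _ (by simp [unshuffles, hs]) (by simpa using hs₁)),
      ih (h ∘ fun s => (s.1, a :: s.2)) fun s hs hs₁ => hh _ (by simp [unshuffles, hs]) hs₁]
    exact (Fin.sum_univ_succ (fun i : Fin (l.length + 1) =>
      h ([(a :: l)[i]], (a :: l).eraseIdx i))).symm

end List

lemma Derivation.leibniz_list_prod_map {R A β : Type*} [CommRing R] [CommRing A] [Algebra R A]
    (D : Derivation R A A) (g : β → A) (d : β → β) (hD : ∀ b, D (g b) = g (d b)) (l : List β) :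
    D (l.map g).prod = ∑ i : Fin l.length, ((l.set i (d l[i])).map g).prod := by
  induction l with
  | nil => simp
  | cons b l ih =>
    rw [List.map_cons, List.prod_cons, D.leibniz, ih, hD, smul_eq_mul, smul_eq_mul,
      Finset.mul_sum, add_comm, mul_comm]
    exact (Fin.sum_univ_succ (fun i : Fin (l.length + 1) =>
      (((b :: l).set i (d (b :: l)[i])).map g).prod)).symm

namespace MvPolynomial

lemma prod_map_X_eq_monomial {σ R : Type*} [CommRing R] [DecidableEq σ] (M : Multiset σ) :
    (M.map (X : σ → MvPolynomial σ R)).prod = monomial (Multiset.toFinsupp M) 1 := by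
  induction M using Multiset.induction with
  | empty => simp
  | cons a M ih =>
    rw [Multiset.map_cons, Multiset.prod_cons, ih, ← Multiset.singleton_add,
      Multiset.toFinsupp_add, Multiset.toFinsupp_singleton, monomial_single_add, pow_one]

lemma exists_mem_vars_pderiv_ne_zero {σ R : Type*} [CommRing R] [IsDomain R] [CharZero R]
    {P : MvPolynomial σ R} {n : ℕ} (hP : P.IsHomogeneous n) (hn : n ≠ 0) (hP0 : P ≠ 0) :
    ∃ i ∈ P.vars, pderiv i P ≠ 0 := by
  obtain ⟨d, hd⟩ := ne_zero_iff.mp hP0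
  obtain ⟨i, hi⟩ : ∃ i, d i ≠ 0 := by
    by_contra! h
    exact hn (by simpa [show d = 0 from Finsupp.ext h] using (hP hd).symm)
  refine ⟨i, (mem_vars_iff_mem_support i).mpr ⟨d, mem_support_iff.mpr hd, by simpa⟩, ?_⟩
  have hle : Finsupp.single i 1 ≤ d := Finsupp.single_le_iff.mpr (Nat.one_le_iff_ne_zero.mpr hi)
  have hdi : (d - Finsupp.single i 1 : σ →₀ ℕ) i + 1 = d i := by simp; omega
  refine ne_zero_iff.mpr ⟨d - Finsupp.single i 1, ?_⟩
  rw [coeff_pderiv, tsub_add_cancel_of_le hle]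
  exact mul_ne_zero hd (by exact_mod_cast hdi ▸ hi)

end MvPolynomial

namespace Module.Basis

open MvPolynomial

section

variable {K L I : Type*} [Field K] [AddCommGroup L] [Module K L] (b : Module.Basis I K L)

def toMvPolynomial : L →ₗ[K] MvPolynomial I K := b.constr K X

@[simp] lemma toMvPolynomial_basis (i : I) : b.toMvPolynomial (b i) = X i := b.constr_basis K X i

end

variable {K L I : Type*} [Field K] [LieRing L] [LieAlgebra K L] (b : Module.Basis I K L)

def adDerivation (a : L) : Derivation K (MvPolynomial I K) (MvPolynomial I K) :=
  mkDerivation K fun i => b.toMvPolynomial ⁅a, b i⁆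

lemma adDerivation_X (a : L) (i : I) : b.adDerivation a (X i) = b.toMvPolynomial ⁅a, b i⁆ :=
  mkDerivation_X K _ i

lemma adDerivation_toMvPolynomial (a c : L) :
    b.adDerivation a (b.toMvPolynomial c) = b.toMvPolynomial ⁅a, c⁆ := by
  have : (b.adDerivation a).toLinearMap ∘ₗ b.toMvPolynomial =
      b.toMvPolynomial ∘ₗ LieAlgebra.ad K L a := b.ext fun i => by simp [adDerivation_X]
  exact LinearMap.congr_fun this c

end Module.Basis

namespace UniversalEnvelopingAlgebra

attribute [local instance] LieRing.ofAssociativeRing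

section CommRing

variable (R : Type*) {L : Type*} [CommRing R] [LieRing L] [LieAlgebra R L]

def prodι (l : List L) : UniversalEnvelopingAlgebra R L := (l.map (ι R)).prod

@[simp] lemma prodι_nil : prodι R ([] : List L) = 1 := rfl

@[simp] lemma prodι_cons (a : L) (l : List L) : prodι R (a :: l) = ι R a * prodι R l :=
  List.prod_cons

lemma prodι_append (l l' : List L) : prodι R (l ++ l') = prodι R l * prodι R l' := by
  simp [prodι]

variable (L) in
def filtration (p : ℕ) : Submodule R (UniversalEnvelopingAlgebra R L) :=
  Submodule.span R (prodι R '' {l | l.length ≤ p})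

variable (L) in
def counit : UniversalEnvelopingAlgebra R L →ₐ[R] R := lift R 0

variable (L) in
def comulLieHom :
    L →ₗ⁅R⁆ UniversalEnvelopingAlgebra R L ⊗[R] UniversalEnvelopingAlgebra R L where
  toLinearMap := (TensorProduct.mk R _ _).flip 1 ∘ₗ (ι R : L →ₗ⁅R⁆ _).toLinearMap +
    TensorProduct.mk R _ _ 1 ∘ₗ (ι R : L →ₗ⁅R⁆ _).toLinearMap
  map_lie' {a b} := by
    simp only [LinearMap.toFun_eq_coe, LinearMap.add_apply, LinearMap.comp_apply,
      LieHom.coe_toLinearMap, LinearMap.flip_apply, TensorProduct.mk_apply, LieHom.map_lie,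
      Ring.lie_def, mul_add, add_mul, Algebra.TensorProduct.tmul_mul_tmul, one_mul, mul_one,
      TensorProduct.sub_tmul, TensorProduct.tmul_sub]
    abel

variable (L) in
def comul :
    UniversalEnvelopingAlgebra R L →ₐ[R]
      UniversalEnvelopingAlgebra R L ⊗[R] UniversalEnvelopingAlgebra R L :=
  lift R (comulLieHom R L)

variable {R}

@[simp] lemma counit_ι (a : L) : counit R L (ι R a) = 0 := lift_ι_apply R 0 a

@[simp] lemma comul_ι (a : L) : comul R L (ι R a) = ι R a ⊗ₜ 1 + 1 ⊗ₜ ι R a :=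
  lift_ι_apply R _ a

lemma ι_injective_of_center_eq_bot (h : LieAlgebra.center R L = ⊥) :
    Function.Injective (ι R : L → UniversalEnvelopingAlgebra R L) := by
  have had : Function.Injective (LieAlgebra.ad R L) := by
    rw [← LieHom.ker_eq_bot, LieAlgebra.ad_ker_eq_self_module_ker,
      LieAlgebra.self_module_ker_eq_center, h]
  intro a a' haa'
  apply had
  simpa only [lift_ι_apply] using congrArg (lift R (LieAlgebra.ad R L)) haa'

lemma prodι_mem_filtration {l : List L} {p : ℕ} (h : l.length ≤ p) :
    prodι R l ∈ filtration R L p :=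
  Submodule.subset_span ⟨l, h, rfl⟩

lemma ι_mem_filtration_one (a : L) : ι R a ∈ filtration R L 1 := by
  simpa [prodι] using prodι_mem_filtration (R := R) (l := [a]) le_rfl

lemma filtration_mono : Monotone (filtration R L) := fun _ _ h =>
  Submodule.span_mono (Set.image_mono fun _ hl => le_trans hl h)

lemma filtration_zero : filtration R L 0 = 1 := by
  have : prodι R '' {l : List L | l.length ≤ 0} = {1} := by simp
  rw [filtration, this, Submodule.one_eq_span]

lemma mul_mem_filtration {u v : UniversalEnvelopingAlgebra R L} {p q : ℕ}
    (hu : u ∈ filtration R L p) (hv : v ∈ filtration R L q) :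
    u * v ∈ filtration R L (p + q) := by
  have := Submodule.mul_mem_mul hu hv
  rw [filtration, filtration, Submodule.span_mul_span] at this
  refine Submodule.span_mono ?_ this
  rintro _ ⟨_, ⟨l, hl, rfl⟩, _, ⟨l', hl', rfl⟩, rfl⟩
  exact ⟨l ++ l', by simp only [Set.mem_ofPred_eq, List.length_append] at *; omega,
    prodι_append R l l'⟩

lemma exists_mem_filtration (u : UniversalEnvelopingAlgebra R L) :
    ∃ p, u ∈ filtration R L p := by
  obtain ⟨t, rfl⟩ : ∃ t, mkAlgHom R L t = u := RingCon.mkₐ_surjective _ u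
  induction t using TensorAlgebra.induction with
  | algebraMap r =>
    exact ⟨0, by rw [AlgHom.commutes, filtration_zero]; exact Submodule.algebraMap_mem r⟩
  | ι a => exact ⟨1, by simpa using ι_mem_filtration_one (R := R) a⟩
  | mul t t' ht ht' =>
    obtain ⟨p, hp⟩ := ht
    obtain ⟨q, hq⟩ := ht'
    exact ⟨p + q, by rw [map_mul]; exact mul_mem_filtration hp hq⟩
  | add t t' ht ht' =>
    obtain ⟨p, hp⟩ := ht
    obtain ⟨q, hq⟩ := ht'
    refine ⟨max p q, ?_⟩
    rw [map_add]
    exact add_mem (filtration_mono (le_max_left p q) hp) (filtration_mono (le_max_right p q) hq)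

lemma exists_mem_filtration_succ_notMem {u : UniversalEnvelopingAlgebra R L}
    (hu : u ∉ Set.range (algebraMap R (UniversalEnvelopingAlgebra R L))) :
    ∃ p, u ∈ filtration R L (p + 1) ∧ u ∉ filtration R L p := by
  classical
  have hex := exists_mem_filtration u
  have h0 : Nat.find hex ≠ 0 := fun h => hu <| by
    simpa [h, filtration_zero, Submodule.mem_one] using Nat.find_spec hex
  obtain ⟨p, hp⟩ := Nat.exists_eq_add_one_of_ne_zero h0
  exact ⟨p, hp ▸ Nat.find_spec hex, Nat.find_min hex (by omega)⟩

lemma lie_ι_prodι (a : L) (l : List L) :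
    ⁅ι R a, prodι R l⁆ = ∑ i : Fin l.length, prodι R (l.set i ⁅a, l[i]⁆) := by
  induction l with
  | nil => simp [prodι, Ring.lie_def]
  | cons b l ih =>
    have hleib : ⁅ι R a, ι R b * prodι R l⁆ =
        ⁅ι R a, ι R b⁆ * prodι R l + ι R b * ⁅ι R a, prodι R l⁆ := by
      simp only [Ring.lie_def]; noncomm_ring
    rw [prodι_cons, hleib, ih, Finset.mul_sum, ← LieHom.map_lie]
    exact (Fin.sum_univ_succ (fun i : Fin (l.length + 1) =>
      prodι R ((b :: l).set i ⁅a, (b :: l)[i]⁆))).symm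

lemma prodι_sub_prodι_mem_filtration {l l' : List L} (h : l.Perm l') :
    prodι R l - prodι R l' ∈ filtration R L (l.length - 1) := by
  induction h with
  | nil => simp
  | cons a h ih =>
    rename_i l₁ l₂
    rcases l₁ with _ | ⟨c, l₁⟩
    · simp [h.symm.eq_nil]
    · rw [prodι_cons R a, prodι_cons R a, ← mul_sub]
      simpa [add_comm] using mul_mem_filtration (ι_mem_filtration_one (R := R) a) ih
  | swap a b l =>
    have : prodι R (b :: a :: l) - prodι R (a :: b :: l) = ι R ⁅b, a⁆ * prodι R l := by
      simp only [prodι_cons, LieHom.map_lie, Ring.lie_def]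
      noncomm_ring
    rw [this]
    simpa [add_comm] using
      mul_mem_filtration (ι_mem_filtration_one (R := R) ⁅b, a⁆) (prodι_mem_filtration le_rfl)
  | trans h₁ h₂ ih₁ ih₂ =>
    rw [← sub_add_sub_cancel]
    exact add_mem ih₁ (h₁.length_eq ▸ ih₂)

lemma comul_prodι (l : List L) :
    comul R L (prodι R l) = (l.unshuffles.map fun s => prodι R s.1 ⊗ₜ prodι R s.2).sum := by
  induction l with
  | nil => simp [prodι, List.unshuffles, Algebra.TensorProduct.one_def]
  | cons a l ih =>
    rw [prodι_cons, map_mul, comul_ι, ih, List.unshuffles, List.map_append, List.sum_append,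
      List.map_map, List.map_map, add_mul, ← List.sum_map_mul_left, ← List.sum_map_mul_left]
    congr 1 <;> simp [Function.comp_def, Algebra.TensorProduct.tmul_mul_tmul, -ι_apply]

variable {S : Type*} [CommRing S] [Algebra R S]

/-- The `p`-th convolution power of `f` for `comul`. For `f 1 = 0` it stands in for the principal
symbol map of degree `p`, whose construction would otherwise need the PBW theorem. -/
def symbol (f : UniversalEnvelopingAlgebra R L →ₗ[R] S) :
    ℕ → UniversalEnvelopingAlgebra R L →ₗ[R] S
  | 0 => Algebra.linearMap R S ∘ₗ (counit R L).toLinearMap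
  | p + 1 => LinearMap.mul' R S ∘ₗ TensorProduct.map f (symbol f p) ∘ₗ (comul R L).toLinearMap

lemma symbol_succ_prodι (f : UniversalEnvelopingAlgebra R L →ₗ[R] S) (p : ℕ) (l : List L) :
    symbol f (p + 1) (prodι R l) =
      (l.unshuffles.map fun s => f (prodι R s.1) * symbol f p (prodι R s.2)).sum := by
  simp [symbol, comul_prodι, map_list_sum, Function.comp_def, -ι_apply]

variable {f : UniversalEnvelopingAlgebra R L →ₗ[R] S} (hf : f 1 = 0)
include hf

lemma symbol_prodι_of_length_lt {p : ℕ} {l : List L} (h : l.length < p) :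
    symbol f p (prodι R l) = 0 := by
  induction p generalizing l with
  | zero => omega
  | succ p ih =>
    rw [symbol_succ_prodι]
    refine List.sum_eq_zero fun _ hx => ?_
    obtain ⟨s, hs, rfl⟩ := List.mem_map.mp hx
    have hlen := List.length_add_length_of_mem_unshuffles hs
    rcases s with ⟨_ | _, s₂⟩
    · simp [prodι, hf]
    · rw [ih (by simp at hlen ⊢; omega), mul_zero]

lemma symbol_prodι_of_length_eq {p : ℕ} {l : List L} (h : l.length = p) :
    symbol f p (prodι R l) = p.factorial • (l.map fun a => f (ι R a)).prod := by
  induction p generalizing l with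
  | zero => simp_all [symbol, prodι]
  | succ p ih =>
    rw [symbol_succ_prodι, List.sum_map_unshuffles_of_length_fst_eq_one]
    · have hterm (i : Fin l.length) :
          f (prodι R [l[i]]) * symbol f p (prodι R (l.eraseIdx i)) =
            p.factorial • (l.map fun a => f (ι R a)).prod := by
        rw [ih (by rw [List.length_eraseIdx_of_lt i.2, h]; rfl), mul_smul_comm]
        congr 1
        simpa [prodι, -ι_apply] using
          ((List.getElem_cons_eraseIdx_perm i.2).map fun a => f (ι R a)).prod_eq
      rw [Finset.sum_congr rfl fun i _ => hterm i]
      simp [h, Nat.factorial_succ, mul_smul]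
    · rintro ⟨_ | ⟨b, _ | ⟨c, t⟩⟩, s₂⟩ hs hs₁
      · simp [prodι, hf]
      · simp at hs₁
      · have := List.length_add_length_of_mem_unshuffles hs
        simp only [List.length_cons] at this
        rw [symbol_prodι_of_length_lt hf (l := s₂) (by omega), mul_zero]

lemma symbol_lie_ι (a : L) (D : Derivation R S S) (hD : ∀ b, D (f (ι R b)) = f (ι R ⁅a, b⁆))
    {p : ℕ} {u : UniversalEnvelopingAlgebra R L} (hu : u ∈ filtration R L p) :
    symbol f p ⁅ι R a, u⁆ = D (symbol f p u) := by
  induction hu using Submodule.span_induction with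
  | mem _ h =>
    obtain ⟨l, hl, rfl⟩ := h
    rw [lie_ι_prodι, map_sum]
    rcases Nat.lt_or_eq_of_le hl with hlt | rfl
    · rw [symbol_prodι_of_length_lt hf hlt, map_zero]
      exact Finset.sum_eq_zero fun i _ => symbol_prodι_of_length_lt hf (by simpa using hlt)
    · rw [symbol_prodι_of_length_eq hf rfl, map_nsmul,
        D.leibniz_list_prod_map (fun b => f (ι R b)) _ hD, Finset.smul_sum]
      exact Finset.sum_congr rfl fun i _ => symbol_prodι_of_length_eq hf (List.length_set ..)
  | zero => simp
  | add u v _ _ hu hv => rw [lie_add, map_add, map_add, hu, hv, map_add]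
  | smul c u _ hu => rw [lie_smul, map_smul, map_smul, hu, D.map_smul]

end CommRing

section Field

open MvPolynomial

variable {K L I : Type*} [Field K] [LieRing L] [LieAlgebra K L]

lemma exists_linearMap_comp_ι {M : Type*} [AddCommGroup M] [Module K M]
    (hι : Function.Injective (ι K : L → UniversalEnvelopingAlgebra K L)) (φ : L →ₗ[K] M) :
    ∃ f : UniversalEnvelopingAlgebra K L →ₗ[K] M, f 1 = 0 ∧ ∀ a, f (ι K a) = φ a := by
  obtain ⟨ψ, hψ⟩ := (ι K : L →ₗ⁅K⁆ _).toLinearMap.exists_leftInverse_of_injective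
    (LinearMap.ker_eq_bot.mpr hι)
  refine ⟨φ ∘ₗ (ψ - (counit K L).toLinearMap.smulRight (ψ 1)), by simp, fun a => ?_⟩
  simpa [-ι_apply] using congrArg φ (LinearMap.congr_fun hψ a)

variable (b : Module.Basis I K L)

def pbwMonomial (M : Multiset I) : UniversalEnvelopingAlgebra K L := prodι K (M.toList.map b)

lemma prodι_mem_span_prodι_map_basis (l : List L) :
    prodι K l ∈ Submodule.span K
      ((fun ll : List I => prodι K (ll.map b)) '' {ll | ll.length = l.length}) := by
  induction l with
  | nil => exact Submodule.subset_span ⟨[], rfl, rfl⟩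
  | cons a l ih =>
    have ha := Submodule.apply_mem_span_image_of_mem_span (ι K : L →ₗ⁅K⁆ _).toLinearMap
      (b.mem_span a)
    have := Submodule.mul_mem_mul ha ih
    rw [Submodule.span_mul_span] at this
    rw [prodι_cons]
    refine Submodule.span_mono ?_ this
    rintro _ ⟨_, ⟨_, ⟨i, rfl⟩, rfl⟩, _, ⟨ll, hll, rfl⟩, rfl⟩
    exact ⟨i :: ll, by simpa using hll, by simp [prodι_cons]⟩

lemma filtration_le_span_pbwMonomial (p : ℕ) :
    filtration K L p ≤ Submodule.span K (pbwMonomial b '' {M | M.card ≤ p}) := by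
  induction p using Nat.strong_induction_on with
  | _ p ih =>
  refine Submodule.span_le.mpr ?_
  rintro _ ⟨l, hl, rfl⟩
  refine Submodule.span_le.mpr ?_ (prodι_mem_span_prodι_map_basis b l)
  rintro _ ⟨ll, hll, rfl⟩
  simp only [Set.mem_ofPred_eq] at hl hll
  change prodι K (ll.map b) ∈ Submodule.span K _
  rw [← sub_add_cancel (prodι K (ll.map b)) (pbwMonomial b ll)]
  refine add_mem ?_ (Submodule.subset_span ⟨ll, by simp; omega, rfl⟩)
  rcases ll with _ | ⟨i, ll⟩
  · simp [pbwMonomial, prodι]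
  have hperm : ((i :: ll).map b).Perm (((i :: ll : List I) : Multiset I).toList.map b) :=
    (Multiset.coe_eq_coe.mp (Multiset.coe_toList _)).symm.map b
  have hdiff := prodι_sub_prodι_mem_filtration (R := K) hperm
  simp only [List.length_map, List.length_cons, add_tsub_cancel_right] at hdiff hll
  refine Submodule.span_mono ?_ (ih ll.length (by omega) hdiff)
  exact Set.image_mono fun M hM => by simp only [Set.mem_ofPred_eq] at hM ⊢; omega

variable {b} {f : UniversalEnvelopingAlgebra K L →ₗ[K] MvPolynomial I K} (hf : f 1 = 0)
  (hfb : ∀ i, f (ι K (b i)) = X i)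
include hf hfb

lemma symbol_pbwMonomial [DecidableEq I] {p : ℕ} {M : Multiset I} (hM : M.card = p) :
    symbol f p (pbwMonomial b M) = monomial (Multiset.toFinsupp M) (p.factorial : K) := by
  rw [pbwMonomial, symbol_prodι_of_length_eq hf (by simpa using hM), List.map_map,
    ← nsmul_one, map_nsmul]
  simp only [Function.comp_def, hfb]
  rw [← prod_map_X_eq_monomial, ← Multiset.prod_coe, ← Multiset.map_coe, Multiset.coe_toList]

lemma mem_filtration_of_symbol_eq_zero [CharZero K] {p : ℕ} {u : UniversalEnvelopingAlgebra K L}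
    (hu : u ∈ filtration K L (p + 1)) (h : symbol f (p + 1) u = 0) : u ∈ filtration K L p := by
  classical
  obtain ⟨c, hc, rfl⟩ := (Finsupp.mem_span_image_iff_linearCombination K).mp
    (filtration_le_span_pbwMonomial b (p + 1) hu)
  have hsymbol (M : Multiset I) (hM : M ∈ c.support) :
      symbol f (p + 1) (pbwMonomial b M) =
        if M.card = p + 1 then monomial (Multiset.toFinsupp M) ((p + 1).factorial : K) else 0 := by
    split_ifs with hcard
    · exact symbol_pbwMonomial hf hfb hcard
    · exact symbol_prodι_of_length_lt hf (by simpa using lt_of_le_of_ne (hc hM) hcard)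
  have hlow (M : Multiset I) (hM : M ∈ c.support) : M.card ≤ p := by
    refine Nat.le_of_lt_succ (lt_of_le_of_ne (hc hM) fun hcard => ?_)
    have := congrArg (coeff (Multiset.toFinsupp M)) h
    rw [Finsupp.linearCombination_apply, Finsupp.sum, map_sum, coeff_sum,
      Finset.sum_eq_single M] at this
    · simp [hsymbol M hM, hcard, coeff_monomial, Nat.factorial_ne_zero] at this
      exact Finsupp.mem_support_iff.mp hM this
    · intro M' hM' hne
      rw [map_smul, hsymbol M' hM']
      split_ifs <;> simp [coeff_monomial, (Multiset.toFinsupp.injective.ne hne)]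
    · intro hM'; exact absurd hM hM'
  rw [Finsupp.linearCombination_apply, Finsupp.sum]
  exact Submodule.sum_mem _ fun M hM =>
    Submodule.smul_mem _ _ (prodι_mem_filtration (by simpa using hlow M hM))

lemma symbol_isHomogeneous {p : ℕ} {u : UniversalEnvelopingAlgebra K L}
    (hu : u ∈ filtration K L p) : (symbol f p u).IsHomogeneous p := by
  have hfι (a : L) : (f (ι K a)).IsHomogeneous 1 := by
    rw [← mem_homogeneousSubmodule, homogeneousSubmodule_one_eq_span_X]
    have := Submodule.apply_mem_span_image_of_mem_span
      (f ∘ₗ (ι K : L →ₗ⁅K⁆ _).toLinearMap) (b.mem_span a)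
    rwa [← Set.range_comp, show ⇑(f ∘ₗ (ι K : L →ₗ⁅K⁆ _).toLinearMap) ∘ ⇑b = X from
      funext hfb] at this
  have hprod (l : List L) : ((l.map fun a => f (ι K a)).prod).IsHomogeneous l.length := by
    induction l with
    | nil => exact isHomogeneous_one _ _
    | cons a l ih => simpa [add_comm] using (hfι a).mul ih
  suffices filtration K L p ≤ (homogeneousSubmodule I K p).comap (symbol f p) from
    (mem_homogeneousSubmodule _ _).mp (this hu)
  refine Submodule.span_le.mpr ?_
  rintro _ ⟨l, hl, rfl⟩
  rcases Nat.lt_or_eq_of_le hl with hlt | rfl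
  · simp [symbol_prodι_of_length_lt hf hlt]
  · simp only [SetLike.mem_coe, Submodule.mem_comap, symbol_prodι_of_length_eq hf rfl]
    exact Submodule.smul_of_tower_mem _ _ ((mem_homogeneousSubmodule _ _).mpr (hprod l))

end Field

end UniversalEnvelopingAlgebra

namespace LoopAlg

open MvPolynomial

variable {k : ℕ} {g J : Type*} [LieRing g] [LieAlgebra ℂ g]

lemma tmon_tmul_lie_tmon_tmul (m n : Fin k → ℤ) (x y : g) :
    ⁅(tmon m ⊗ₜ[ℂ] x : LoopAlg k g), tmon n ⊗ₜ[ℂ] y⁆ = tmon (m + n) ⊗ₜ ⁅x, y⁆ := by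
  rw [LieAlgebra.ExtendScalars.bracket_tmul, AddMonoidAlgebra.single_mul_single, one_mul]

lemma center_eq_bot (h : LieAlgebra.center ℂ g = ⊥) :
    LieAlgebra.center ℂ (LoopAlg k g) = ⊥ := by
  refine (LieSubmodule.eq_bot_iff _).mpr fun a ha => ?_
  obtain ⟨c, rfl⟩ := TensorProduct.eq_repr_basis_left (AddMonoidAlgebra.basis (Fin k → ℤ) ℂ) a
  suffices c = 0 by simp [this]
  ext n
  rw [Finsupp.coe_zero, Pi.zero_apply, ← LieSubmodule.mem_bot (R := ℂ) (L := g), ← h,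
    LieModule.mem_maxTrivSubmodule]
  intro x
  have hlie := (LieModule.mem_maxTrivSubmodule ℂ _ _ _).mp ha (tmon 0 ⊗ₜ x)
  rw [Finsupp.sum, lie_sum] at hlie
  simp only [AddMonoidAlgebra.basis_apply, tmon_tmul_lie_tmon_tmul, zero_add] at hlie
  have := TensorProduct.sum_tmul_basis_left_eq_zero (AddMonoidAlgebra.basis (Fin k → ℤ) ℂ)
    (c.mapRange (⁅x, ·⁆) (lie_zero x)) (by rwa [Finsupp.sum_mapRange_index (by simp)])
  simpa using DFunLike.congr_fun this n

variable (bg : Module.Basis J ℂ g)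

def basis : Module.Basis ((Fin k → ℤ) × J) ℂ (LoopAlg k g) :=
  (AddMonoidAlgebra.basis (Fin k → ℤ) ℂ).tensorProduct bg

@[simp] lemma basis_apply (n : Fin k → ℤ) (j : J) : basis bg (n, j) = tmon n ⊗ₜ bg j := by
  simp [basis, Module.Basis.tensorProduct_apply]

variable [Fintype J]

lemma toMvPolynomial_tmon_tmul (n : Fin k → ℤ) (y : g) :
    (basis bg).toMvPolynomial (tmon n ⊗ₜ y) = ∑ j, bg.repr y j • X (n, j) := by
  conv_lhs => rw [← bg.sum_repr y, TensorProduct.tmul_sum, map_sum]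
  simp [TensorProduct.tmul_smul, ← basis_apply]

lemma adDerivation_X_eq (e n : Fin k → ℤ) (x : g) (j : J) :
    (basis bg).adDerivation (tmon e ⊗ₜ x) (X (n, j)) =
      ∑ j', bg.repr ⁅x, bg j⁆ j' • X (e + n, j') := by
  rw [Module.Basis.adDerivation_X, basis_apply, tmon_tmul_lie_tmon_tmul, toMvPolynomial_tmon_tmul]

lemma pderiv_adDerivation {e n₀ : Fin k → ℤ} {j' : J} {P : MvPolynomial ((Fin k → ℤ) × J) ℂ}
    (hP : (e + n₀, j') ∉ P.vars) (x : g) :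
    pderiv (e + n₀, j') ((basis bg).adDerivation (tmon e ⊗ₜ x) P) =
      ∑ j, bg.repr ⁅x, bg j⁆ j' • pderiv (n₀, j) P := by
  classical
  -- As `(e + n₀, j')` does not occur in `P`, only the commutator of `pderiv` with `D` contributes.
  set D := (basis bg).adDerivation (tmon e ⊗ₜ x)
  set E := ∑ j, bg.repr ⁅x, bg j⁆ j' • pderiv (R := ℂ) (n₀, j)
  have hE (Q : MvPolynomial ((Fin k → ℤ) × J) ℂ) :
      E Q = ∑ j, bg.repr ⁅x, bg j⁆ j' • pderiv (n₀, j) Q := by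
    rw [← Derivation.coeFnAddMonoidHom_apply, map_sum, Finset.sum_apply]; rfl
  have hcomm : ⁅pderiv (R := ℂ) (e + n₀, j'), D⁆ = E := by
    refine derivation_ext fun ⟨n, j⟩ => ?_
    have hconst : D (pderiv (e + n₀, j') (X (n, j))) = 0 := by
      rw [pderiv_X, Pi.single_apply]; split_ifs <;> simp
    rw [Derivation.commutator_apply, hconst, sub_zero, hE, adDerivation_X_eq]
    by_cases hn : n = n₀ <;> simp [pderiv_X, Pi.single_apply, hn]
  rw [← hE, ← hcomm, Derivation.commutator_apply, pderiv_eq_zero_of_notMem_vars hP, map_zero,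
    sub_zero]

lemma pderiv_eq_zero_of_adDerivation_eq_zero (hg : LieAlgebra.center ℂ g = ⊥)
    {e n₀ : Fin k → ℤ} {P : MvPolynomial ((Fin k → ℤ) × J) ℂ}
    (hD : ∀ x : g, (basis bg).adDerivation (tmon e ⊗ₜ x) P = 0)
    (hP : ∀ j', (e + n₀, j') ∉ P.vars) (j : J) : pderiv (n₀, j) P = 0 := by
  classical
  ext d
  set y : g := ∑ j, coeff d (pderiv (n₀, j) P) • bg j
  have hy : y = 0 := by
    rw [← LieSubmodule.mem_bot (R := ℂ) (L := g), ← hg, LieModule.mem_maxTrivSubmodule]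
    intro x
    refine bg.ext_elem fun j' => ?_
    have := congrArg (coeff d) (pderiv_adDerivation bg (hP j') x)
    rw [hD x, map_zero, coeff_zero, coeff_sum] at this
    simp [y, lie_sum, this, mul_comm]
  simpa [y, Finsupp.single_apply] using congrArg (fun y => bg.repr y j) hy

lemma pderiv_eq_zero_of_adDerivation_tmon_single_eq_zero (hg : LieAlgebra.center ℂ g = ⊥)
    {P : MvPolynomial ((Fin k → ℤ) × J) ℂ} (i : Fin k) {r : ℤ}
    (hr : 2 * ((P.vars.sup fun v => (v.1 i).natAbs : ℕ) : ℤ) < r)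
    (hD : ∀ x : g, (basis bg).adDerivation (tmon (Pi.single i r) ⊗ₜ x) P = 0)
    {v : (Fin k → ℤ) × J} (hv : v ∈ P.vars) : pderiv v P = 0 := by
  have hB {w} (hw : w ∈ P.vars) : (w.1 i).natAbs ≤ P.vars.sup fun v => (v.1 i).natAbs :=
    Finset.le_sup (f := fun v => (v.1 i).natAbs) hw
  refine pderiv_eq_zero_of_adDerivation_eq_zero bg hg hD (fun j hj => ?_) v.2
  have h₁ := hB hj
  have h₂ := hB hv
  simp only [Pi.add_apply, Pi.single_eq_same] at h₁
  omega

end LoopAlg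

open UniversalEnvelopingAlgebra MvPolynomial in
theorem commutator_nonzero_of_nonconstant
    (k : ℕ) (hk : 2 ≤ k)
    (g : Type*) [LieRing g] [LieAlgebra ℂ g] [FiniteDimensional ℂ g]
    [LieAlgebra.IsSimple ℂ g]
    (Z : UniversalEnvelopingAlgebra ℂ (LoopAlg k g))
    -- `Z` is non-constant, i.e. `Z ∉ ℂ·1`:
    (hZnc : Z ∉ Set.range (algebraMap ℂ (UniversalEnvelopingAlgebra ℂ (LoopAlg k g)))) :
    ∃ p₀ : ℤ, 0 < p₀ ∧ ∀ r : ℤ, p₀ ≤ r → ∃ x : g,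
      UniversalEnvelopingAlgebra.ι ℂ
          (tmon (Pi.single (⟨k - 2, by omega⟩ : Fin k) r) ⊗ₜ[ℂ] x) * Z -
        Z * UniversalEnvelopingAlgebra.ι ℂ
          (tmon (Pi.single (⟨k - 2, by omega⟩ : Fin k) r) ⊗ₜ[ℂ] x) ≠ 0 := by
  have hg : LieAlgebra.center ℂ g = ⊥ := by simp
  let bg := Module.finBasis ℂ g
  let b := LoopAlg.basis (k := k) bg
  obtain ⟨f, hf1, hfι⟩ := exists_linearMap_comp_ι
    (ι_injective_of_center_eq_bot (LoopAlg.center_eq_bot hg)) b.toMvPolynomial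
  have hfb (v) : f (ι ℂ (b v)) = X v := by rw [hfι, Module.Basis.toMvPolynomial_basis]
  obtain ⟨p, hZ, hZp⟩ := exists_mem_filtration_succ_notMem hZnc
  set P := symbol f (p + 1) Z
  have hP0 : P ≠ 0 := fun h => hZp (mem_filtration_of_symbol_eq_zero hf1 hfb hZ h)
  obtain ⟨v, hv, hderiv⟩ :=
    exists_mem_vars_pderiv_ne_zero (symbol_isHomogeneous hf1 hfb hZ) p.succ_ne_zero hP0
  set i : Fin k := ⟨k - 2, by omega⟩
  refine ⟨2 * (P.vars.sup fun v => (v.1 i).natAbs : ℕ) + 1, by positivity, fun r hr => ?_⟩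
  by_contra! hcomm
  refine hderiv (LoopAlg.pderiv_eq_zero_of_adDerivation_tmon_single_eq_zero bg hg i (P := P) (r := r)
    (by omega) (fun x => ?_) hv)
  have := symbol_lie_ι hf1 (tmon (Pi.single i r) ⊗ₜ x) (b.adDerivation _)
    (fun c => by rw [hfι, hfι, Module.Basis.adDerivation_toMvPolynomial]) hZ
  rw [LieRing.of_associative_ring_bracket, hcomm x, map_zero] at this
  exact this.symm
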